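/- arXiv:1511.08407 — 7 statements merged into one kernel-verified Lean document; each statement's English description precedes it below -/
import Mathlib

section
/- Let λ < 1/2 and let F = F_λ. Let X be a random variable with values in (0,∞) having tail law (ξ,β) and satisfying E[F(X)²] < ∞. For p > 0 and a positive integer n, set Y_{p,n} := F(pX + 1/n) − F(pβ + 1/n). Then there exists a constant χ such that |E[Y_{p,n}]| ≤ χ·√(φ(p,n)) for all p > 0 and all positive integers n. -/
open MeasureTheory Real Filter Topology

/-- The transformation function `F_λ`. -/
noncomputable def Flam (lam : ℝ) (x : ℝ) : ℝ :=
  if lam = 0 then Real.log x else x ^ lam / lam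

/-- The weight `φ(p,n) = p^{2λ} (1 + (βnp)⁻¹)^{-1+2λ}`. -/
noncomputable def phiW (lam β : ℝ) (p : ℝ) (n : ℕ) : ℝ :=
  p ^ (2 * lam) * (1 + (β * n * p)⁻¹) ^ (-1 + 2 * lam)

open Set
open scoped ENNReal

/-!
Write `t = 1/n`, `u = pβ + t` and `Y = F(pX + t) - F(u)`, so that
`√φ = β^{-λ} √(pβ) u^{λ-1/2}`. On `{X ≥ β}`, `Y = ∫_β^X p F'(py + t) dy`, hence by Fubini
and the tail law `E[Y; X ≥ β] = ∫_β^∞ p (py + t)^{λ-1} ξ/y dy`, and the bound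
`(py + t)^{λ-1} ≤ u^{λ-1/2} (py)^{-1/2}` makes this `O(√φ)`. On `{X < β}`,
`-Y ≤ F(u) - F(t) ≤ pβ t^{λ-1}` by concavity when `pβ ≤ t`, and
`-Y ≤ F(2pβ) - F(pX) = p^λ (F(2β) - F(X))` by homogeneity when `t ≤ pβ`; both are
`O(√φ (1 + |F(X)|))`, and `F(X)` is integrable because `F(X)²` is.
-/

lemma lintegral_setLIntegral_Ioc_eq {Ω : Type*} [MeasurableSpace Ω] (P : Measure Ω)
    [SFinite P] {X : Ω → ℝ} (hX : Measurable X) (a : ℝ) {g : ℝ → ℝ≥0∞}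
    (hg : Measurable g) :
    ∫⁻ ω, (∫⁻ y in Ioc a (X ω), g y) ∂P
      = ∫⁻ y in Ioi a, P {ω | y ≤ X ω} * g y := by
  set E := {q : Ω × ℝ | a < q.2 ∧ q.2 ≤ X q.1}
  have hE : MeasurableSet E :=
    (measurable_snd measurableSet_Ioi).inter
      (measurableSet_le measurable_snd (hX.comp measurable_fst))
  calc ∫⁻ ω, (∫⁻ y in Ioc a (X ω), g y) ∂P
      = ∫⁻ ω, (∫⁻ y, E.indicator (fun q => g q.2) (ω, y)) ∂P := by
        refine lintegral_congr fun ω => ?_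
        rw [← lintegral_indicator measurableSet_Ioc]
        rfl
    _ = ∫⁻ y, (∫⁻ ω, E.indicator (fun q => g q.2) (ω, y) ∂P) :=
        lintegral_lintegral_swap (f := fun ω y => E.indicator (fun q => g q.2) (ω, y))
          ((hg.comp measurable_snd).indicator hE).aemeasurable
    _ = ∫⁻ y, (Ioi a).indicator (fun y => P {ω | y ≤ X ω} * g y) y := by
        refine lintegral_congr fun y => ?_
        by_cases hy : a < y
        · rw [indicator_of_mem (show y ∈ Ioi a from hy), mul_comm,
            ← lintegral_indicator_const (measurableSet_le measurable_const hX)]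
          congr 1 with ω
          simp [E, Set.indicator, hy]
        · simp [E, Set.indicator, hy]
    _ = ∫⁻ y in Ioi a, P {ω | y ≤ X ω} * g y := lintegral_indicator measurableSet_Ioi _

lemma measurable_flam (lam : ℝ) : Measurable (Flam lam) := by
  unfold Flam
  split_ifs
  · exact measurable_log
  · fun_prop

lemma hasDerivAt_flam {lam z : ℝ} (hz : 0 < z) : HasDerivAt (Flam lam) (z ^ (lam - 1)) z := by
  unfold Flam
  split_ifs with h
  · simpa [h, rpow_neg_one] using hasDerivAt_log hz.ne'
  · exact ((hasDerivAt_rpow_const (Or.inl hz.ne')).div_const lam).congr_deriv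
      (mul_div_cancel_left₀ _ h)

lemma flam_le_flam {lam a b : ℝ} (ha : 0 < a) (hab : a ≤ b) : Flam lam a ≤ Flam lam b := by
  rcases lt_trichotomy lam 0 with h | h | h
  · simp only [Flam, if_neg h.ne]
    exact div_le_div_of_nonpos_of_le h.le (rpow_le_rpow_of_nonpos ha hab h.le)
  · simp only [Flam, if_pos h]
    exact log_le_log ha hab
  · simp only [Flam, if_neg h.ne']
    exact div_le_div_of_nonneg_right (rpow_le_rpow ha.le hab h.le) h.le

lemma flam_mul_sub_flam_mul {lam a b c : ℝ} (ha : 0 < a) (hb : 0 < b) (hc : 0 < c) :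
    Flam lam (a * b) - Flam lam (a * c) = a ^ lam * (Flam lam b - Flam lam c) := by
  unfold Flam
  split_ifs with h
  · rw [log_mul ha.ne' hb.ne', log_mul ha.ne' hc.ne', h, rpow_zero]; ring
  · rw [mul_rpow ha.le hb.le, mul_rpow ha.le hc.le]; ring

lemma flam_add_sub_flam_le {lam a h : ℝ} (hlam : lam ≤ 1) (ha : 0 < a) (hh : 0 ≤ h) :
    Flam lam (a + h) - Flam lam a ≤ h * a ^ (lam - 1) := by
  rcases hh.eq_or_lt with rfl | hh
  · simp
  obtain ⟨c, hc, hslope⟩ := exists_hasDerivAt_eq_slope (Flam lam) (· ^ (lam - 1))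
    (lt_add_of_pos_right a hh)
    (fun x hx => (hasDerivAt_flam (ha.trans_le hx.1)).continuousAt.continuousWithinAt)
    (fun x hx => hasDerivAt_flam (ha.trans hx.1))
  rw [add_sub_cancel_left, eq_div_iff hh.ne'] at hslope
  rw [← hslope, mul_comm]
  exact mul_le_mul_of_nonneg_left (rpow_le_rpow_of_nonpos ha hc.1.le (by linarith)) hh.le

lemma ofReal_flam_max_sub_eq_setLIntegral {lam p t c : ℝ} (hp : 0 < p) (ht : 0 < t) (hc : 0 ≤ c)
    (x : ℝ) :
    ENNReal.ofReal (Flam lam (p * max x c + t) - Flam lam (p * c + t))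
      = ∫⁻ y in Ioc c x, ENNReal.ofReal (p * (p * y + t) ^ (lam - 1)) := by
  rcases le_total x c with hxc | hcx
  · rw [max_eq_right hxc, sub_self, ENNReal.ofReal_zero, Ioc_eq_empty (not_lt.2 hxc),
      Measure.restrict_empty, lintegral_zero_measure]
  have hpos : ∀ y, c ≤ y → 0 < p * y + t := fun y hy => by nlinarith
  have hderiv : ∀ y ∈ uIcc c x, HasDerivAt (fun y => Flam lam (p * y + t))
      (p * (p * y + t) ^ (lam - 1)) y := fun y hy => by
    rw [uIcc_of_le hcx] at hy
    have := (hasDerivAt_flam (lam := lam) (hpos y hy.1)).comp y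
      (((hasDerivAt_id y).const_mul p).add_const t)
    simpa [Function.comp_def, mul_comm] using this
  have hcont : ContinuousOn (fun y => p * (p * y + t) ^ (lam - 1)) (Icc c x) :=
    continuousOn_const.mul
      (ContinuousOn.rpow_const (by fun_prop) fun y hy => Or.inl (hpos y hy.1).ne')
  have hint : IntervalIntegrable (fun y => p * (p * y + t) ^ (lam - 1)) volume c x :=
    (uIcc_of_le hcx ▸ hcont).intervalIntegrable
  rw [max_eq_left hcx, ← intervalIntegral.integral_eq_sub_of_hasDerivAt hderiv hint,
    intervalIntegral.integral_of_le hcx, ofReal_integral_eq_lintegral_ofReal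
      ((intervalIntegrable_iff_integrableOn_Ioc_of_le hcx).1 hint)]
  refine (ae_restrict_iff' measurableSet_Ioc).2 (ae_of_all _ fun y hy => ?_)
  have := hpos y hy.1.le
  positivity

noncomputable def psi (lam v t : ℝ) : ℝ := v ^ (1/2 : ℝ) * (v + t) ^ (lam - 1/2)

lemma psi_nonneg {lam v t : ℝ} (hv : 0 ≤ v) (ht : 0 ≤ t) : 0 ≤ psi lam v t := by
  unfold psi; positivity

lemma rpow_mul_le_psi {lam v t w : ℝ} (hlam : lam ≤ 1/2) (hv : 0 < v) (ht : 0 ≤ t)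
    (hw : 0 < w) (hvtw : v + t ≤ 2 * w) :
    v ^ (1/2 : ℝ) * w ^ (lam - 1/2) ≤ 2 ^ (1/2 - lam) * psi lam v t := by
  have h2 : (2:ℝ) ^ (1/2 - lam) * 2 ^ (lam - 1/2) = 1 := by rw [← rpow_add two_pos]; norm_num
  have hmono : (2 * w) ^ (lam - 1/2) ≤ (v + t) ^ (lam - 1/2) :=
    rpow_le_rpow_of_nonpos (by positivity) hvtw (by linarith)
  calc v ^ (1/2 : ℝ) * w ^ (lam - 1/2)
      = 2 ^ (1/2 - lam) * (v ^ (1/2 : ℝ) * (2 * w) ^ (lam - 1/2)) := by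
        rw [mul_rpow zero_le_two hw.le]
        linear_combination (-(v ^ (1/2 : ℝ) * w ^ (lam - 1/2))) * h2
    _ ≤ 2 ^ (1/2 - lam) * psi lam v t := by unfold psi; gcongr

lemma rpow_le_psi {lam v t : ℝ} (hlam : lam ≤ 1/2) (hv : 0 < v) (ht : 0 ≤ t) (htv : t ≤ v) :
    v ^ lam ≤ 2 ^ (1/2 - lam) * psi lam v t := by
  have hv' : v ^ (1/2 : ℝ) * v ^ (lam - 1/2) = v ^ lam := by rw [← rpow_add hv]; ring_nf
  exact hv' ▸ rpow_mul_le_psi hlam hv ht hv (by linarith)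

lemma mul_rpow_le_psi {lam v t : ℝ} (hlam : lam ≤ 1/2) (hv : 0 < v) (hvt : v ≤ t) :
    v * t ^ (lam - 1) ≤ 2 ^ (1/2 - lam) * psi lam v t := by
  have ht : 0 < t := hv.trans_le hvt
  have hv' : v ^ (1/2 : ℝ) * v ^ (1/2 : ℝ) = v := by rw [← rpow_add hv]; norm_num
  have ht' : t ^ (1/2 : ℝ) * t ^ (lam - 1) = t ^ (lam - 1/2) := by rw [← rpow_add ht]; ring_nf
  calc v * t ^ (lam - 1) = v ^ (1/2 : ℝ) * (v ^ (1/2 : ℝ) * t ^ (lam - 1)) := by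
        rw [← mul_assoc, hv']
    _ ≤ v ^ (1/2 : ℝ) * (t ^ (1/2 : ℝ) * t ^ (lam - 1)) := by gcongr
    _ ≤ 2 ^ (1/2 - lam) * psi lam v t := by
        rw [ht']; exact rpow_mul_le_psi hlam hv ht.le ht (by linarith)

lemma sqrt_phiW {lam β p : ℝ} {n : ℕ} (hβ : 0 < β) (hp : 0 < p) (hn : 0 < n) :
    √(phiW lam β p n) = β ^ (-lam) * psi lam (p * β) (1 / n) := by
  have hn' : (0 : ℝ) < n := Nat.cast_pos.2 hn
  have hv : 0 < p * β := mul_pos hp hβ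
  have hu : 0 < p * β + 1 / n := by positivity
  have hq : 1 + (β * n * p)⁻¹ = (p * β + 1 / n) / (p * β) := by field_simp
  rw [← sqrt_sq (by unfold psi; positivity : 0 ≤ β ^ (-lam) * psi lam (p * β) (1 / n))]
  congr 1
  have h1 : 0 < phiW lam β p n := by unfold phiW; positivity
  have h2 : 0 < (β ^ (-lam) * psi lam (p * β) (1 / n)) ^ 2 := by unfold psi; positivity
  rw [← exp_log h1, ← exp_log h2]
  congr 1
  unfold phiW psi
  rw [hq, log_mul (by positivity) (by positivity), log_rpow hp, log_rpow (by positivity),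
    log_div hu.ne' hv.ne', log_pow, log_mul (rpow_pos_of_pos hβ _).ne' (by positivity),
    log_mul (rpow_pos_of_pos hv _).ne' (rpow_pos_of_pos hu _).ne',
    log_rpow hβ, log_rpow hv, log_rpow hu, log_mul hp.ne' hβ.ne']
  push_cast
  ring

lemma flam_sub_flam_le {lam β p t x : ℝ} (hlam : lam ≤ 1/2) (hβ : 0 < β) (hp : 0 < p)
    (ht : 0 < t) (hx : 0 < x) :
    Flam lam (p * β + t) - Flam lam (p * x + t)
      ≤ 2 ^ (1/2 - lam) * (β ^ lam + |Flam lam (2 * β)| + |Flam lam x|)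
          * (β ^ (-lam) * psi lam (p * β) t) := by
  have hv : 0 < p * β := by positivity
  have hβl : 0 < β ^ lam := by positivity
  have hF := abs_nonneg (Flam lam x)
  have hF2 := abs_nonneg (Flam lam (2 * β))
  have hψ := psi_nonneg (lam := lam) hv.le ht.le
  rcases le_total (p * β) t with hvt | htv
  · calc Flam lam (p * β + t) - Flam lam (p * x + t) ≤ Flam lam (t + p * β) - Flam lam t := by
          have := flam_le_flam (lam := lam) ht (by nlinarith : t ≤ p * x + t)
          rw [add_comm]; linarith
      _ ≤ p * β * t ^ (lam - 1) := flam_add_sub_flam_le (by linarith) ht hv.le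
      _ ≤ 2 ^ (1/2 - lam) * psi lam (p * β) t := mul_rpow_le_psi hlam hv hvt
      _ = 2 ^ (1/2 - lam) * β ^ lam * (β ^ (-lam) * psi lam (p * β) t) := by
          rw [rpow_neg hβ.le]; field_simp
      _ ≤ _ := by gcongr; linarith
  · have hpow : p ^ lam ≤ 2 ^ (1/2 - lam) * (β ^ (-lam) * psi lam (p * β) t) :=
      calc p ^ lam = β ^ (-lam) * (p * β) ^ lam := by
            rw [mul_rpow hp.le hβ.le, rpow_neg hβ.le]; field_simp
        _ ≤ β ^ (-lam) * (2 ^ (1/2 - lam) * psi lam (p * β) t) := by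
            gcongr; exact rpow_le_psi hlam hv ht.le htv
        _ = _ := by ring
    calc Flam lam (p * β + t) - Flam lam (p * x + t)
          ≤ Flam lam (p * (2 * β)) - Flam lam (p * x) := by
          have h1 := flam_le_flam (lam := lam) (by positivity)
            (by linarith : p * β + t ≤ p * (2 * β))
          have h2 := flam_le_flam (lam := lam) (by positivity) (by linarith : p * x ≤ p * x + t)
          linarith
      _ = p ^ lam * (Flam lam (2 * β) - Flam lam x) := flam_mul_sub_flam_mul hp (by positivity) hx
      _ ≤ p ^ lam * (β ^ lam + |Flam lam (2 * β)| + |Flam lam x|) := by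
          gcongr
          linarith [le_abs_self (Flam lam (2 * β)), neg_abs_le (Flam lam x)]
      _ ≤ 2 ^ (1/2 - lam) * (β ^ (-lam) * psi lam (p * β) t)
            * (β ^ lam + |Flam lam (2 * β)| + |Flam lam x|) := by gcongr
      _ = _ := by ring

lemma abs_flam_sub_flam_le {lam β p t x : ℝ} (hlam : lam ≤ 1/2) (hβ : 0 < β) (hp : 0 < p)
    (ht : 0 < t) (hx : 0 < x) :
    |Flam lam (p * x + t) - Flam lam (p * β + t)|
      ≤ 2 ^ (1/2 - lam) * (β ^ lam + |Flam lam (2 * β)| + |Flam lam x|)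
          * (β ^ (-lam) * psi lam (p * β) t)
        + (Flam lam (p * max x β + t) - Flam lam (p * β + t)) := by
  have hlow := flam_sub_flam_le hlam hβ hp ht hx
  rcases le_total x β with hxβ | hβx
  · have hle := flam_le_flam (lam := lam) (by positivity) (by nlinarith : p * x + t ≤ p * β + t)
    rw [abs_of_nonpos (by linarith), max_eq_right hxβ]
    linarith
  · have hle := flam_le_flam (lam := lam) (by positivity) (by nlinarith : p * β + t ≤ p * x + t)
    have hψ := psi_nonneg (lam := lam) (mul_pos hp hβ).le ht.le
    rw [abs_of_nonneg (by linarith), max_eq_left hβx, le_add_iff_nonneg_left]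
    positivity

lemma mul_rpow_sub_one_le {lam β p t y : ℝ} (hlam : lam ≤ 1/2) (hβ : 0 < β) (hp : 0 < p)
    (ht : 0 < t) (hy : β ≤ y) :
    p * (p * y + t) ^ (lam - 1) ≤ β ^ (-1/2 : ℝ) * psi lam (p * β) t * y ^ (-1/2 : ℝ) := by
  have hy0 : 0 < y := hβ.trans_le hy
  have hsplit :
      (p * y + t) ^ (lam - 1) = (p * y + t) ^ (lam - 1/2) * (p * y + t) ^ (-1/2 : ℝ) := by
    rw [← rpow_add (by positivity)]; ring_nf
  have h1 : (p * y + t) ^ (lam - 1/2) ≤ (p * β + t) ^ (lam - 1/2) :=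
    rpow_le_rpow_of_nonpos (by positivity) (by nlinarith) (by linarith)
  have h2 : (p * y + t) ^ (-1/2 : ℝ) ≤ (p * y) ^ (-1/2 : ℝ) :=
    rpow_le_rpow_of_nonpos (by positivity) (by linarith) (by norm_num)
  have hp' : p * p ^ (-1/2 : ℝ) = p ^ (1/2 : ℝ) := by
    rw [← rpow_one_add' hp.le (by norm_num)]; norm_num
  have hβ' : β ^ (-1/2 : ℝ) * β ^ (1/2 : ℝ) = 1 := by
    rw [← rpow_add hβ]; norm_num
  calc p * (p * y + t) ^ (lam - 1)
      ≤ p * ((p * β + t) ^ (lam - 1/2) * (p * y) ^ (-1/2 : ℝ)) := by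
        rw [hsplit]; gcongr
    _ = β ^ (-1/2 : ℝ) * psi lam (p * β) t * y ^ (-1/2 : ℝ) := by
        unfold psi
        rw [mul_rpow hp.le hy0.le, mul_rpow hp.le hβ.le]
        linear_combination ((p * β + t) ^ (lam - 1/2) * y ^ (-1/2 : ℝ)) * hp'
          - (p ^ (1/2 : ℝ) * (p * β + t) ^ (lam - 1/2) * y ^ (-1/2 : ℝ)) * hβ'

lemma setLIntegral_tail_le {lam β p t ξ : ℝ} (hlam : lam ≤ 1/2) (hβ : 0 < β) (hp : 0 < p)
    (ht : 0 < t) (hξ : 0 ≤ ξ) :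
    ∫⁻ y in Ioi β, ENNReal.ofReal (ξ / y) * ENNReal.ofReal (p * (p * y + t) ^ (lam - 1))
      ≤ ENNReal.ofReal (2 * ξ * β ^ (lam - 1) * (β ^ (-lam) * psi lam (p * β) t)) := by
  set c := ξ * (β ^ (-1/2 : ℝ) * psi lam (p * β) t)
  have hpt : ∀ y ∈ Ioi β,
      ENNReal.ofReal (ξ / y) * ENNReal.ofReal (p * (p * y + t) ^ (lam - 1))
        ≤ ENNReal.ofReal (c * y ^ (-3/2 : ℝ)) := fun y (hy : β < y) => by
    have hy0 : 0 < y := hβ.trans hy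
    have hy' : y ^ (-1/2 : ℝ) / y = y ^ (-3/2 : ℝ) := by
      rw [← rpow_sub_one hy0.ne']; norm_num
    rw [← ENNReal.ofReal_mul (by positivity)]
    refine ENNReal.ofReal_le_ofReal ?_
    calc ξ / y * (p * (p * y + t) ^ (lam - 1))
        ≤ ξ / y * (β ^ (-1/2 : ℝ) * psi lam (p * β) t * y ^ (-1/2 : ℝ)) := by
          gcongr ξ / y * ?_; exact mul_rpow_sub_one_le hlam hβ hp ht hy.le
      _ = c * y ^ (-3/2 : ℝ) := by rw [← hy']; ring
  have hint : IntegrableOn (fun y : ℝ => c * y ^ (-3/2 : ℝ)) (Ioi β) :=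
    (integrableOn_Ioi_rpow_of_lt (by norm_num) hβ).const_mul c
  have hβ' : β ^ (-1/2 : ℝ) * β ^ (-1/2 : ℝ) = β ^ (lam - 1) * β ^ (-lam) := by
    rw [← rpow_add hβ, ← rpow_add hβ]; ring_nf
  calc ∫⁻ y in Ioi β, ENNReal.ofReal (ξ / y) * ENNReal.ofReal (p * (p * y + t) ^ (lam - 1))
      ≤ ∫⁻ y in Ioi β, ENNReal.ofReal (c * y ^ (-3/2 : ℝ)) :=
        setLIntegral_mono' measurableSet_Ioi hpt
    _ = ENNReal.ofReal (∫ y in Ioi β, c * y ^ (-3/2 : ℝ)) := by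
        refine (ofReal_integral_eq_lintegral_ofReal hint
          ((ae_restrict_iff' measurableSet_Ioi).2 (ae_of_all _ fun y (hy : β < y) => ?_))).symm
        have := hβ.trans hy
        have := psi_nonneg (lam := lam) (mul_pos hp hβ).le ht.le
        positivity
    _ = ENNReal.ofReal (2 * ξ * β ^ (lam - 1) * (β ^ (-lam) * psi lam (p * β) t)) := by
        rw [integral_const_mul, integral_Ioi_rpow_of_lt (by norm_num) hβ]
        rw [show (-3/2 : ℝ) + 1 = -1/2 by norm_num]
        congr 1
        linear_combination (2 * ξ * psi lam (p * β) t) * hβ'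

lemma lintegral_flam_max_sub_le {lam ξ β p t : ℝ} (hlam : lam ≤ 1/2) (hξ : 0 ≤ ξ)
    (hβ : 0 < β) (hp : 0 < p) (ht : 0 < t) {Ω : Type*} [MeasurableSpace Ω] (P : Measure Ω)
    [SFinite P] {X : Ω → ℝ} (hX : Measurable X)
    (htail : ∀ x : ℝ, β ≤ x → P {ω | x ≤ X ω} = ENNReal.ofReal (ξ / x)) :
    ∫⁻ ω, ENNReal.ofReal (Flam lam (p * max (X ω) β + t) - Flam lam (p * β + t)) ∂P
      ≤ ENNReal.ofReal (2 * ξ * β ^ (lam - 1) * (β ^ (-lam) * psi lam (p * β) t)) := by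
  simp_rw [ofReal_flam_max_sub_eq_setLIntegral hp ht hβ.le]
  rw [lintegral_setLIntegral_Ioc_eq P hX β (by fun_prop)]
  refine le_of_eq_of_le (setLIntegral_congr_fun measurableSet_Ioi fun y (hy : β < y) => ?_)
    (setLIntegral_tail_le hlam hβ hp ht hξ)
  rw [htail y hy.le]

lemma abs_integral_flam_sub_le {lam ξ β p t : ℝ} (hlam : lam ≤ 1/2) (hξ : 0 ≤ ξ)
    (hβ : 0 < β) (hp : 0 < p) (ht : 0 < t) {Ω : Type*} [MeasurableSpace Ω] (P : Measure Ω)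
    [IsProbabilityMeasure P] {X : Ω → ℝ} (hX : Measurable X) (hXpos : ∀ ω, 0 < X ω)
    (htail : ∀ x : ℝ, β ≤ x → P {ω | x ≤ X ω} = ENNReal.ofReal (ξ / x))
    (hint : Integrable (fun ω => Flam lam (X ω)) P) :
    |∫ ω, (Flam lam (p * X ω + t) - Flam lam (p * β + t)) ∂P|
      ≤ (2 ^ (1/2 - lam) * (β ^ lam + |Flam lam (2 * β)| + ∫ ω, |Flam lam (X ω)| ∂P)
          + 2 * ξ * β ^ (lam - 1)) * (β ^ (-lam) * psi lam (p * β) t) := by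
  set S := β ^ (-lam) * psi lam (p * β) t
  set C := 2 ^ (1/2 - lam) * (β ^ lam + |Flam lam (2 * β)| + ∫ ω, |Flam lam (X ω)| ∂P)
  have hS : 0 ≤ S := by have := psi_nonneg (lam := lam) (mul_pos hp hβ).le ht.le; positivity
  set A := fun ω => 2 ^ (1/2 - lam) * (β ^ lam + |Flam lam (2 * β)| + |Flam lam (X ω)|) * S
  have hAint : Integrable A P := (((integrable_const _).add hint.abs).const_mul _).mul_const _
  have hA : ∫⁻ ω, ENNReal.ofReal (A ω) ∂P = ENNReal.ofReal (C * S) := by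
    rw [← ofReal_integral_eq_lintegral_ofReal hAint (ae_of_all _ fun ω => by positivity)]
    simp only [A, C, integral_mul_const, integral_const_mul,
      integral_add (integrable_const _) hint.abs, integral_const, probReal_univ, one_smul]
  have hpt : ∀ ω, ENNReal.ofReal ‖Flam lam (p * X ω + t) - Flam lam (p * β + t)‖
      ≤ ENNReal.ofReal (A ω)
        + ENNReal.ofReal (Flam lam (p * max (X ω) β + t) - Flam lam (p * β + t)) := fun ω =>
    (ENNReal.ofReal_le_ofReal (abs_flam_sub_flam_le hlam hβ hp ht (hXpos ω))).trans
      ENNReal.ofReal_add_le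
  have hbound : ∫⁻ ω, ENNReal.ofReal ‖Flam lam (p * X ω + t) - Flam lam (p * β + t)‖ ∂P
      ≤ ENNReal.ofReal ((C + 2 * ξ * β ^ (lam - 1)) * S) := by
    calc _ ≤ _ := lintegral_mono hpt
      _ = _ := lintegral_add_left' hAint.aemeasurable.ennreal_ofReal _
      _ ≤ _ := add_le_add hA.le (lintegral_flam_max_sub_le hlam hξ hβ hp ht P hX htail)
      _ = _ := by rw [← ENNReal.ofReal_add (by positivity) (by positivity), add_mul]
  calc |∫ ω, (Flam lam (p * X ω + t) - Flam lam (p * β + t)) ∂P|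
      ≤ (∫⁻ ω, ENNReal.ofReal ‖Flam lam (p * X ω + t) - Flam lam (p * β + t)‖ ∂P).toReal :=
        (norm_eq_abs _).symm.trans_le (norm_integral_le_lintegral_norm _)
    _ ≤ _ := ENNReal.toReal_le_of_le_ofReal (by positivity) hbound

theorem stmt_0
    {lam ξ β : ℝ} (hlam : lam < 1/2) (hξ : 0 < ξ) (hξβ : ξ ≤ β)
    {Ω : Type*} [MeasurableSpace Ω] (P : Measure Ω) [IsProbabilityMeasure P]
    (X : Ω → ℝ) (hX : Measurable X) (hXpos : ∀ ω, 0 < X ω)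
    (htail : ∀ x : ℝ, β ≤ x → P {ω | x ≤ X ω} = ENNReal.ofReal (ξ / x))
    (hmom : Integrable (fun ω => (Flam lam (X ω))^2) P) :
    ∃ χ : ℝ, ∀ p : ℝ, 0 < p → ∀ n : ℕ, 0 < n →
      |∫ ω, (Flam lam (p * X ω + 1/(n:ℝ)) - Flam lam (p * β + 1/(n:ℝ))) ∂P|
        ≤ χ * Real.sqrt (phiW lam β p n) := by
  have hβ : 0 < β := hξ.trans_le hξβ
  have hint : Integrable (fun ω => Flam lam (X ω)) P :=
    ((memLp_two_iff_integrable_sq ((measurable_flam lam).comp hX).aestronglyMeasurable).2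
      hmom).integrable one_le_two
  refine ⟨2 ^ (1/2 - lam) * (β ^ lam + |Flam lam (2 * β)| + ∫ ω, |Flam lam (X ω)| ∂P)
    + 2 * ξ * β ^ (lam - 1), fun p hp n hn => ?_⟩
  rw [sqrt_phiW hβ hp hn]
  exact abs_integral_flam_sub_le hlam.le hξ.le hβ hp (by positivity) P hX hXpos htail hint
end

section
/- Let λ < 1/2 and β > 0, and let (p_{i,n}) be a Zipf array with constants 0 < κ₁ ≤ κ₂. Then for every δ > 0 there exists a constant M_δ such that for every integer n ≥ 2, n^{−1+2λ}·(ln n)·Σ_{i=1}^{⌊n/(δ·ln n)⌋} φ(p_{i,n}, n) ≤ M_δ. -/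
open MeasureTheory Real Filter Topology

/-- `p` is a Zipf array with constants `κ₁ ≤ κ₂`. -/
def IsZipfArray (p : ℕ → ℕ → ℝ) (κ₁ κ₂ : ℝ) : Prop :=
  0 < κ₁ ∧ κ₁ ≤ κ₂ ∧ ∀ n : ℕ, 2 ≤ n → ∀ i : ℕ, 1 ≤ i → i ≤ n →
    0 < p i n ∧ p i n ≤ 1 ∧
    κ₁ / ((i : ℝ) * Real.log n) ≤ p i n ∧ p i n ≤ κ₂ / ((i : ℝ) * Real.log n)

/-!
Since `2λ < 1`, `φ(p, n) ≤ p^{2λ}`, and the Zipf bounds give `p_{i,n}^{2λ} ≤ C (i ln n)^{-2λ}` with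
`C = max (κ₁^{2λ}, κ₂^{2λ})`. With `K = ⌊n / (δ ln n)⌋`, the comparison
`Σ_{i ≤ K} i^{-2λ} = O(K^{1-2λ})` then bounds the normalised sum by a multiple of `δ^{2λ-1}`.
This needs `K ≤ n`, so that the Zipf bounds apply to every term; that holds once `δ ln n ≥ 1`,
and the finitely many remaining `n` are absorbed into the constant.
-/

lemma one_sub_mul_rpow_neg_le_sub {a x : ℝ} (ha₀ : 0 ≤ a) (ha₁ : a ≤ 1) (hx : 0 ≤ x) :
    (1 - a) * (x + 1) ^ (-a) ≤ (x + 1) ^ (1 - a) - x ^ (1 - a) := by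
  have hy : 0 < x + 1 := by linarith
  have hamgm : x ^ (1 - a) * (x + 1) ^ a ≤ x + a := by
    have := geom_mean_le_arith_mean2_weighted (sub_nonneg.2 ha₁) ha₀ hx hy.le (by ring)
    linarith
  have hcancel : (x + 1) ^ a * (x + 1) ^ (-a) = 1 := by
    rw [← rpow_add hy, add_neg_cancel, rpow_zero]
  have hlow : x ^ (1 - a) ≤ (x + a) * (x + 1) ^ (-a) := by
    calc x ^ (1 - a) = x ^ (1 - a) * (x + 1) ^ a * (x + 1) ^ (-a) := by
          rw [mul_assoc, hcancel, mul_one]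
      _ ≤ (x + a) * (x + 1) ^ (-a) := by gcongr
  rw [show (x + 1) ^ (1 - a) = (x + 1) * (x + 1) ^ (-a) by
    rw [sub_eq_add_neg, rpow_add hy, rpow_one]]
  linear_combination hlow

lemma one_sub_mul_sum_Icc_rpow_neg_le {a : ℝ} (ha₀ : 0 ≤ a) (ha₁ : a ≤ 1) (K : ℕ) :
    (1 - a) * ∑ i ∈ Finset.Icc 1 K, (i : ℝ) ^ (-a) ≤ (K : ℝ) ^ (1 - a) := by
  induction K with
  | zero => simpa using rpow_nonneg le_rfl (1 - a)
  | succ K ih =>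
    rw [Finset.sum_Icc_succ_top (by omega), mul_add, Nat.cast_succ]
    linarith [one_sub_mul_rpow_neg_le_sub ha₀ ha₁ K.cast_nonneg]

lemma sum_Icc_rpow_neg_le_of_nonpos {a : ℝ} (ha : a ≤ 0) (K : ℕ) :
    ∑ i ∈ Finset.Icc 1 K, (i : ℝ) ^ (-a) ≤ (K : ℝ) ^ (1 - a) := by
  calc ∑ i ∈ Finset.Icc 1 K, (i : ℝ) ^ (-a)
      ≤ ∑ _i ∈ Finset.Icc 1 K, (K : ℝ) ^ (-a) := by
        gcongr with i hi
        · linarith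
        · exact_mod_cast (Finset.mem_Icc.1 hi).2
    _ = (K : ℝ) ^ (1 - a) := by
        rw [Finset.sum_const, Nat.card_Icc, add_tsub_cancel_right, nsmul_eq_mul, sub_eq_add_neg,
          rpow_one_add' K.cast_nonneg (by linarith)]

lemma sum_Icc_rpow_neg_le {a : ℝ} (ha : a < 1) (K : ℕ) :
    ∑ i ∈ Finset.Icc 1 K, (i : ℝ) ^ (-a) ≤ max 1 (1 - a)⁻¹ * (K : ℝ) ^ (1 - a) := by
  have hK : 0 ≤ (K : ℝ) ^ (1 - a) := by positivity
  rcases le_total a 0 with ha₀ | ha₀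
  · exact (sum_Icc_rpow_neg_le_of_nonpos ha₀ K).trans (le_mul_of_one_le_left hK (le_max_left _ _))
  · have h := one_sub_mul_sum_Icc_rpow_neg_le ha₀ ha.le K
    calc ∑ i ∈ Finset.Icc 1 K, (i : ℝ) ^ (-a) ≤ (1 - a)⁻¹ * (K : ℝ) ^ (1 - a) := by
          rw [inv_mul_eq_div, le_div_iff₀ (by linarith)]
          linarith
      _ ≤ max 1 (1 - a)⁻¹ * (K : ℝ) ^ (1 - a) := by gcongr; exact le_max_right _ _

lemma phiW_le_rpow {lam β p : ℝ} (hlam : lam ≤ 1 / 2) (hβ : 0 ≤ β) (hp : 0 ≤ p) (n : ℕ) :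
    phiW lam β p n ≤ p ^ (2 * lam) := by
  have hbase : 1 ≤ 1 + (β * n * p)⁻¹ := le_add_of_nonneg_right (by positivity)
  calc phiW lam β p n ≤ p ^ (2 * lam) * 1 := by
        unfold phiW
        gcongr
        exact rpow_le_one_of_one_le_of_nonpos hbase (by linarith)
    _ = p ^ (2 * lam) := mul_one _

lemma rpow_le_max_of_mem_Icc {a q κ₁ κ₂ : ℝ} (hκ₁ : 0 < κ₁) (hq : q ∈ Set.Icc κ₁ κ₂) :
    q ^ a ≤ max (κ₁ ^ a) (κ₂ ^ a) := by
  rcases le_total a 0 with ha | ha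
  · exact (rpow_le_rpow_of_nonpos hκ₁ hq.1 ha).trans (le_max_left _ _)
  · exact (rpow_le_rpow (hκ₁.le.trans hq.1) hq.2 ha).trans (le_max_right _ _)

namespace IsZipfArray

variable {p : ℕ → ℕ → ℝ} {κ₁ κ₂ : ℝ}

lemma rpow_le (hz : IsZipfArray p κ₁ κ₂) {n i : ℕ} (hn : 2 ≤ n) (hi : 1 ≤ i) (hin : i ≤ n)
    (a : ℝ) : p i n ^ a ≤ max (κ₁ ^ a) (κ₂ ^ a) * ((i : ℝ) * log n) ^ (-a) := by
  obtain ⟨hκ₁, -, hbounds⟩ := hz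
  obtain ⟨hp, -, hlow, hupp⟩ := hbounds n hn i hi hin
  have hx : 0 < (i : ℝ) * log n :=
    mul_pos (by exact_mod_cast hi) (log_pos (by exact_mod_cast hn))
  have hq : p i n * ((i : ℝ) * log n) ∈ Set.Icc κ₁ κ₂ :=
    ⟨(div_le_iff₀ hx).1 hlow, (le_div_iff₀ hx).1 hupp⟩
  calc p i n ^ a = (p i n * ((i : ℝ) * log n)) ^ a * ((i : ℝ) * log n) ^ (-a) := by
        rw [mul_rpow hp.le hx.le, mul_assoc, ← rpow_add hx, add_neg_cancel, rpow_zero, mul_one]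
    _ ≤ max (κ₁ ^ a) (κ₂ ^ a) * ((i : ℝ) * log n) ^ (-a) := by
        gcongr
        exact rpow_le_max_of_mem_Icc hκ₁ hq

lemma rpow_mul_log_mul_sum_phiW_le (hz : IsZipfArray p κ₁ κ₂) {lam β δ : ℝ} (hlam : lam < 1 / 2)
    (hβ : 0 ≤ β) (hδ : 0 < δ) {n : ℕ} (hn : 2 ≤ n) (hδn : 1 ≤ δ * log n) :
    (n : ℝ) ^ (-1 + 2 * lam) * log n *
        ∑ i ∈ Finset.Icc 1 ⌊(n : ℝ) / (δ * log n)⌋₊, phiW lam β (p i n) n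
      ≤ max (κ₁ ^ (2 * lam)) (κ₂ ^ (2 * lam)) * max 1 (1 - 2 * lam)⁻¹ * δ ^ (2 * lam - 1) := by
  have ha : 2 * lam < 1 := by linarith
  set a := 2 * lam
  set L := log n
  set K := ⌊(n : ℝ) / (δ * L)⌋₊
  set C := max (κ₁ ^ a) (κ₂ ^ a)
  set D := max 1 (1 - a)⁻¹
  have hnpos : (0 : ℝ) < n := by positivity
  have hL : 0 < L := log_pos (by exact_mod_cast hn)
  have hCL : 0 ≤ C * L ^ (-a) :=
    mul_nonneg ((rpow_nonneg hz.1.le a).trans (le_max_left _ _)) (rpow_nonneg hL.le _)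
  have hK : (K : ℝ) ≤ n / (δ * L) := Nat.floor_le (by positivity)
  have hKn : K ≤ n := Nat.floor_le_of_le (div_le_self hnpos.le hδn)
  have hterm : ∀ i ∈ Finset.Icc 1 K, phiW lam β (p i n) n ≤ C * L ^ (-a) * (i : ℝ) ^ (-a) := by
    intro i hi
    obtain ⟨hi₁, hiK⟩ := Finset.mem_Icc.1 hi
    calc phiW lam β (p i n) n ≤ p i n ^ a :=
          phiW_le_rpow hlam.le hβ (hz.2.2 n hn i hi₁ (hiK.trans hKn)).1.le n
      _ ≤ C * ((i : ℝ) * L) ^ (-a) := hz.rpow_le hn hi₁ (hiK.trans hKn) a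
      _ = C * L ^ (-a) * (i : ℝ) ^ (-a) := by rw [mul_rpow i.cast_nonneg hL.le]; ring
  have hsum : ∑ i ∈ Finset.Icc 1 K, phiW lam β (p i n) n
      ≤ C * L ^ (-a) * (D * (n / (δ * L)) ^ (1 - a)) := by
    calc _ ≤ C * L ^ (-a) * ∑ i ∈ Finset.Icc 1 K, (i : ℝ) ^ (-a) := by
          rw [Finset.mul_sum]; exact Finset.sum_le_sum hterm
      _ ≤ C * L ^ (-a) * (D * (K : ℝ) ^ (1 - a)) := by
          gcongr
          exact sum_Icc_rpow_neg_le ha K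
      _ ≤ C * L ^ (-a) * (D * (n / (δ * L)) ^ (1 - a)) := by
          gcongr
  calc (n : ℝ) ^ (-1 + a) * L * ∑ i ∈ Finset.Icc 1 K, phiW lam β (p i n) n
      ≤ (n : ℝ) ^ (-1 + a) * L * (C * L ^ (-a) * (D * (n / (δ * L)) ^ (1 - a))) := by
        gcongr
    _ = C * D * δ ^ (a - 1) := by
        set b := 1 - a
        rw [show -1 + a = -b by ring, show -a = b - 1 by ring, show a - 1 = -b by ring,
          rpow_neg hnpos.le, rpow_neg hδ.le, rpow_sub_one hL.ne', div_rpow hnpos.le (by positivity),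
          mul_rpow hδ.le hL.le]
        field_simp

end IsZipfArray

theorem stmt_6 {lam β κ₁ κ₂ : ℝ} (hlam : lam < 1/2) (hβ : 0 < β)
    (p : ℕ → ℕ → ℝ) (hz : IsZipfArray p κ₁ κ₂) :
    ∀ δ : ℝ, 0 < δ → ∃ M : ℝ, ∀ n : ℕ, 2 ≤ n →
      (n : ℝ) ^ (-1 + 2 * lam) * Real.log n *
        ∑ i ∈ Finset.Icc 1 (Nat.floor ((n : ℝ) / (δ * Real.log n))), phiW lam β (p i n) n
      ≤ M := by
  intro δ hδ
  have hlarge : ∀ᶠ n : ℕ in atTop, (n : ℝ) ^ (-1 + 2 * lam) * log n *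
      ∑ i ∈ Finset.Icc 1 ⌊(n : ℝ) / (δ * log n)⌋₊, phiW lam β (p i n) n
      ≤ max (κ₁ ^ (2 * lam)) (κ₂ ^ (2 * lam)) * max 1 (1 - 2 * lam)⁻¹ * δ ^ (2 * lam - 1) := by
    have hlog := (tendsto_log_atTop.comp tendsto_natCast_atTop_atTop).eventually_ge_atTop δ⁻¹
    filter_upwards [eventually_ge_atTop 2, hlog] with n hn hlogn
    exact hz.rpow_mul_log_mul_sum_phiW_le hlam hβ.le hδ hn
      ((inv_le_iff_one_le_mul₀' hδ).1 hlogn)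
  obtain ⟨M, hM⟩ := (isBoundedUnder_of_eventually_le hlarge).bddAbove_range
  exact ⟨M, fun n _ ↦ hM ⟨n, rfl⟩⟩
end

section
/- Let λ < 1/2 and β > 0, and let (p_{i,n}) be a Zipf array with constants 0 < κ₁ ≤ κ₂. Then for every δ > 0, the quantity n^{−1+2λ}·(ln n)·Σ_{i=⌈n/(δ·ln n)⌉}^{n} φ(p_{i,n}, n) tends to infinity as n → ∞. -/
/-!
For `i ≥ n / (δ log n)` we have `i log n ≥ n / δ`, so with `p = p_{i,n} ≍ 1 / (i log n)` the factor
`1 + (βnp)⁻¹` is at most a constant times `i log n / n`. As `-1 + 2λ < 0`, this bounds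
`φ(p_{i,n}, n)` below by a constant times `n^{1-2λ} / (i log n)`, so the normalised sum dominates a
constant times the harmonic sum `∑_{i=m}^{n} 1/i ≥ log ((n+1)/m)` with `m = ⌈n / (δ log n)⌉`,
which is at least `log (δ log n / 2) → ∞`.
-/

open MeasureTheory Real Filter Topology

lemma log_succ_sub_log_le_inv {x : ℝ} (hx : 0 < x) : log (x + 1) - log x ≤ x⁻¹ := by
  rw [← log_div (by positivity) hx.ne']
  calc log ((x + 1) / x) ≤ (x + 1) / x - 1 := log_le_sub_one_of_pos (by positivity)
    _ = x⁻¹ := by field_simp; ring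

lemma log_div_le_sum_Icc_inv {m : ℕ} (hm : 1 ≤ m) (n : ℕ) :
    log ((n + 1) / m) ≤ ∑ i ∈ Finset.Icc m n, (i : ℝ)⁻¹ := by
  have hm' : (0 : ℝ) < m := by exact_mod_cast hm
  rcases le_or_gt m n with hmn | hnm
  · rw [log_div (by positivity) hm'.ne']
    calc log (n + 1) - log m = ∑ i ∈ Finset.Icc m n, (log ((i : ℝ) + 1) - log i) := by
          simpa using (Finset.sum_Icc_sub hmn (fun i : ℕ => log (i : ℝ))).symm
      _ ≤ ∑ i ∈ Finset.Icc m n, (i : ℝ)⁻¹ := by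
          refine Finset.sum_le_sum fun i hi => log_succ_sub_log_le_inv ?_
          have := (Finset.mem_Icc.mp hi).1
          exact_mod_cast hm.trans this
  · rw [Finset.Icc_eq_empty_of_lt hnm, Finset.sum_empty]
    refine log_nonpos (by positivity) ((div_le_one hm').mpr ?_)
    exact_mod_cast hnm

lemma min_rpow_le_rpow_of_mem_Icc {a b q : ℝ} (ha : 0 < a) (haq : a ≤ q) (hqb : q ≤ b) (r : ℝ) :
    min (a ^ r) (b ^ r) ≤ q ^ r := by
  rcases le_total 0 r with hr | hr
  · exact (min_le_left _ _).trans (rpow_le_rpow ha.le haq hr)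
  · exact (min_le_right _ _).trans (rpow_le_rpow_of_nonpos (ha.trans_le haq) hqb hr)

lemma one_add_inv_le_of_le_mul {β δ κ p t n : ℝ} (hβ : 0 < β) (hκ : 0 < κ) (hn : 0 < n)
    (ht : 0 < t) (hκp : κ ≤ p * t) (hnt : n ≤ δ * t) :
    1 + (β * n * p)⁻¹ ≤ (δ + (β * κ)⁻¹) * t / n := by
  have hp : 0 < p := pos_of_mul_pos_left (hκ.trans_le hκp) ht.le
  have hone : 1 ≤ δ * t / n := (le_div_iff₀ hn).mpr (by linarith)
  have hinv : (β * n * p)⁻¹ ≤ (β * κ)⁻¹ * t / n :=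
    calc (β * n * p)⁻¹ = t / (β * n * (p * t)) := by field_simp
      _ ≤ t / (β * n * κ) := by gcongr
      _ = (β * κ)⁻¹ * t / n := by field_simp
  calc 1 + (β * n * p)⁻¹ ≤ δ * t / n + (β * κ)⁻¹ * t / n := add_le_add hone hinv
    _ = (δ + (β * κ)⁻¹) * t / n := by ring

lemma le_phiW {lam β κ₁ κ₂ δ p t : ℝ} {n : ℕ} (hlam : lam < 1 / 2) (hβ : 0 < β) (hκ₁ : 0 < κ₁)
    (hn : 0 < (n : ℝ)) (ht : 0 < t) (hlo : κ₁ ≤ p * t) (hhi : p * t ≤ κ₂) (hnt : n ≤ δ * t) :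
    min (κ₁ ^ (2 * lam)) (κ₂ ^ (2 * lam)) * (δ + (β * κ₁)⁻¹) ^ (-1 + 2 * lam) *
      (n : ℝ) ^ (1 - 2 * lam) * t⁻¹ ≤ phiW lam β p n := by
  have hp : 0 < p := pos_of_mul_pos_left (hκ₁.trans_le hlo) ht.le
  have hC : 0 < δ + (β * κ₁)⁻¹ := by
    have : 0 < δ := pos_of_mul_pos_left (hn.trans_le hnt) ht.le
    positivity
  have hpow : min (κ₁ ^ (2 * lam)) (κ₂ ^ (2 * lam)) * t ^ (-(2 * lam)) ≤ p ^ (2 * lam) := by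
    calc min (κ₁ ^ (2 * lam)) (κ₂ ^ (2 * lam)) * t ^ (-(2 * lam))
        ≤ (p * t) ^ (2 * lam) * t ^ (-(2 * lam)) := by
          gcongr; exact min_rpow_le_rpow_of_mem_Icc hκ₁ hlo hhi _
      _ = p ^ (2 * lam) := by
          rw [mul_rpow hp.le ht.le, rpow_neg ht.le, mul_assoc,
            mul_inv_cancel₀ (rpow_pos_of_pos ht _).ne', mul_one]
  have hfactor : ((δ + (β * κ₁)⁻¹) * t / n) ^ (-1 + 2 * lam) ≤
      (1 + (β * n * p)⁻¹) ^ (-1 + 2 * lam) :=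
    rpow_le_rpow_of_nonpos (by positivity) (one_add_inv_le_of_le_mul hβ hκ₁ hn ht hlo hnt)
      (by linarith)
  have ht_pow : t ^ (-(2 * lam)) * t ^ (-1 + 2 * lam) = t⁻¹ := by
    rw [← rpow_add ht, show -(2 * lam) + (-1 + 2 * lam) = -1 by ring, rpow_neg_one]
  calc _ = min (κ₁ ^ (2 * lam)) (κ₂ ^ (2 * lam)) * t ^ (-(2 * lam)) *
        ((δ + (β * κ₁)⁻¹) * t / n) ^ (-1 + 2 * lam) := by
        rw [div_rpow (by positivity) hn.le, mul_rpow hC.le ht.le, div_eq_mul_inv,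
          ← rpow_neg hn.le, show -(-1 + 2 * lam) = 1 - 2 * lam by ring, ← ht_pow]
        ring
    _ ≤ phiW lam β p n := mul_le_mul hpow hfactor (by positivity) (by positivity)

lemma IsZipfArray.mul_sum_inv_le_sum_phiW {lam β κ₁ κ₂ δ : ℝ} {p : ℕ → ℕ → ℝ}
    (hlam : lam < 1 / 2) (hβ : 0 < β) (hz : IsZipfArray p κ₁ κ₂) {m n : ℕ} (hn : 2 ≤ n)
    (hm : (n : ℝ) ≤ δ * (m * log n)) :
    min (κ₁ ^ (2 * lam)) (κ₂ ^ (2 * lam)) * (δ + (β * κ₁)⁻¹) ^ (-1 + 2 * lam) *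
        ∑ i ∈ Finset.Icc m n, (i : ℝ)⁻¹ ≤
      (n : ℝ) ^ (-1 + 2 * lam) * log n * ∑ i ∈ Finset.Icc m n, phiW lam β (p i n) n := by
  obtain ⟨hκ₁, -, hbd⟩ := hz
  set c := min (κ₁ ^ (2 * lam)) (κ₂ ^ (2 * lam)) * (δ + (β * κ₁)⁻¹) ^ (-1 + 2 * lam)
  have hn0 : (0 : ℝ) < n := by positivity
  have hL : 0 < log n := log_pos (by exact_mod_cast hn)
  have hm0 : 0 < m := Nat.pos_of_ne_zero fun h => by simp [h] at hm; linarith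
  have hδ : 0 < δ := pos_of_mul_pos_left (hn0.trans_le hm) (by positivity)
  have hnn : (n : ℝ) ^ (-1 + 2 * lam) * (n : ℝ) ^ (1 - 2 * lam) = 1 := by
    rw [← rpow_add hn0, show -1 + 2 * lam + (1 - 2 * lam) = 0 by ring, rpow_zero]
  have hterm : ∀ i ∈ Finset.Icc m n,
      c * (n : ℝ) ^ (1 - 2 * lam) * (i * log n)⁻¹ ≤ phiW lam β (p i n) n := by
    intro i hi
    obtain ⟨hmi, hin⟩ := Finset.mem_Icc.mp hi
    have hi : 0 < i := hm0.trans_le hmi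
    obtain ⟨-, -, hlo, hhi⟩ := hbd n hn i hi hin
    have ht : (0 : ℝ) < i * log n := by positivity
    refine le_phiW hlam hβ hκ₁ hn0 ht ((div_le_iff₀ ht).mp hlo) ((le_div_iff₀ ht).mp hhi)
      (hm.trans ?_)
    gcongr
  calc c * ∑ i ∈ Finset.Icc m n, (i : ℝ)⁻¹
      = (n : ℝ) ^ (-1 + 2 * lam) * log n *
          ∑ i ∈ Finset.Icc m n, c * (n : ℝ) ^ (1 - 2 * lam) * (i * log n)⁻¹ := by
        rw [Finset.mul_sum, Finset.mul_sum]
        refine Finset.sum_congr rfl fun i _ => ?_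
        calc c * (i : ℝ)⁻¹
            = ((n : ℝ) ^ (-1 + 2 * lam) * (n : ℝ) ^ (1 - 2 * lam)) *
                (log n * (log n)⁻¹) * c * (i : ℝ)⁻¹ := by
              rw [hnn, mul_inv_cancel₀ hL.ne']; ring
          _ = _ := by rw [mul_inv]; ring
    _ ≤ _ := by gcongr with i hi; exact hterm i hi

lemma eventually_mul_log_le_self {δ : ℝ} (hδ : 0 < δ) : ∀ᶠ x : ℝ in atTop, δ * log x ≤ x := by
  filter_upwards [isLittleO_log_id_atTop.bound (inv_pos.mpr hδ), eventually_ge_atTop 1]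
    with x hbound hx
  rw [norm_of_nonneg (log_nonneg hx), id, norm_of_nonneg (by linarith)] at hbound
  calc δ * log x ≤ δ * (δ⁻¹ * x) := by gcongr
    _ = x := by field_simp

lemma div_two_le_succ_div_ceil_div {a : ℝ} {n : ℕ} (ha : 0 < a) (han : a ≤ n) :
    a / 2 ≤ (n + 1) / ⌈n / a⌉₊ := by
  have hx : 1 ≤ n / a := (one_le_div ha).mpr han
  have hm : (⌈n / a⌉₊ : ℝ) ≤ 2 * (n / a) := by linarith [Nat.ceil_lt_add_one (zero_le_one.trans hx)]
  have hm0 : (0 : ℝ) < ⌈n / a⌉₊ := hx.trans_lt' zero_lt_one |>.trans_le (Nat.le_ceil _)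
  rw [div_le_div_iff₀ two_pos hm0]
  calc a * ⌈n / a⌉₊ ≤ a * (2 * (n / a)) := by gcongr
    _ = n * 2 := by field_simp
    _ ≤ (n + 1) * 2 := by linarith

theorem stmt_7 {lam β κ₁ κ₂ : ℝ} (hlam : lam < 1/2) (hβ : 0 < β)
    (p : ℕ → ℕ → ℝ) (hz : IsZipfArray p κ₁ κ₂) :
    ∀ δ : ℝ, 0 < δ →
      Tendsto (fun n : ℕ =>
          (n : ℝ) ^ (-1 + 2 * lam) * Real.log n *
            ∑ i ∈ Finset.Icc (Nat.ceil ((n : ℝ) / (δ * Real.log n))) n, phiW lam β (p i n) n)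
        atTop atTop := by
  intro δ hδ
  have hκ₁ : 0 < κ₁ := hz.1
  have hκ₂ : 0 < κ₂ := hκ₁.trans_le hz.2.1
  set c := min (κ₁ ^ (2 * lam)) (κ₂ ^ (2 * lam)) * (δ + (β * κ₁)⁻¹) ^ (-1 + 2 * lam)
  have hc : 0 < c := by positivity
  have hlog : Tendsto (fun n : ℕ => log n) atTop atTop :=
    tendsto_log_atTop.comp tendsto_natCast_atTop_atTop
  have hlower : Tendsto (fun n : ℕ => c * log (δ * log n / 2)) atTop atTop :=
    (tendsto_log_atTop.comp ((hlog.const_mul_atTop hδ).atTop_div_const two_pos)).const_mul_atTop hc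
  refine tendsto_atTop_mono' atTop ?_ hlower
  filter_upwards [eventually_ge_atTop 2,
    tendsto_natCast_atTop_atTop.eventually (eventually_mul_log_le_self hδ)] with n hn hsmall
  have hL : 0 < log n := log_pos (by exact_mod_cast hn)
  set m := ⌈(n : ℝ) / (δ * log n)⌉₊
  have hm : (n : ℝ) ≤ δ * (m * log n) := by
    have := Nat.le_ceil ((n : ℝ) / (δ * log n))
    rw [div_le_iff₀ (by positivity)] at this
    linarith
  have hm1 : 1 ≤ m := Nat.one_le_ceil_iff.mpr (by positivity)
  calc c * log (δ * log n / 2) ≤ c * log ((n + 1) / m) := by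
        gcongr c * log ?_
        exact div_two_le_succ_div_ceil_div (by positivity) hsmall
    _ ≤ c * ∑ i ∈ Finset.Icc m n, (i : ℝ)⁻¹ := by gcongr; exact log_div_le_sum_Icc_inv hm1 n
    _ ≤ _ := hz.mul_sum_inv_le_sum_phiW hlam hβ hn hm
end

section
/- Let (φ_{i,n}) be positive real weights (integers n ≥ 1, 1 ≤ i ≤ n) such that (Σ_{i=1}^{n} φ_{i,n}²)/(Σ_{i=1}^{n} φ_{i,n})² → 0 as n → ∞. On a probability space, for each n let U_{1,n}, …, U_{n,n} be independent integrable real random variables such that the family {U_{i,n}} is uniformly integrable relative to the weights {φ_{i,n}}. Then (Σ_{i=1}^{n} (U_{i,n} − E[U_{i,n}]))/(Σ_{i=1}^{n} φ_{i,n}) converges to 0 in probability as n → ∞. -/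
open MeasureTheory Real Filter Topology ProbabilityTheory

/-!
Given `ε`, truncate `U i n` at level `N * φ i n` with `N` taken from the relative uniform
integrability. The truncated parts are independent and bounded by `N * φ i n`, so their centred sum
has variance at most `N² ∑ φ i n ^ 2` and hence `L¹` norm at most `N √(∑ φ i n ^ 2)`. The tails
have total `L¹` norm at most `ε ∑ φ i n`, and centring at most doubles it. So the normalised sum has
`L¹` norm at most `N √(∑ φ² / (∑ φ)²) + 2ε`, whose limit superior is at most `2ε`; convergence in
`L¹` gives convergence in probability.
-/

lemma Finset.sum_Icc_one_eq_sum_fin {M : Type*} [AddCommMonoid M] (f : ℕ → M) (n : ℕ) :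
    ∑ i ∈ Finset.Icc 1 n, f i = ∑ j : Fin n, f (j + 1) := by
  rw [Fin.sum_univ_eq_sum_range (fun j => f (j + 1)), Finset.range_eq_Ico, Finset.sum_Ico_add']
  rfl

section

variable {Ω : Type*} [MeasurableSpace Ω] {P : Measure Ω}

lemma tendstoInMeasure_zero_of_tendsto_integral_abs {ι : Type*} {l : Filter ι}
    {f : ι → Ω → ℝ} (hf : ∀ n, Integrable (f n) P)
    (h : Tendsto (fun n => ∫ ω, |f n ω| ∂P) l (𝓝 0)) :
    TendstoInMeasure P f l (fun _ => 0) := by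
  refine tendstoInMeasure_of_tendsto_eLpNorm one_ne_zero (fun n => (hf n).aestronglyMeasurable)
    aestronglyMeasurable_const ?_
  have hnorm : ∀ n, eLpNorm (f n - fun _ => 0) 1 P = ENNReal.ofReal (∫ ω, |f n ω| ∂P) := by
    intro n
    rw [show f n - (fun _ => 0) = f n from sub_zero _, eLpNorm_one_eq_lintegral_enorm,
      ← ofReal_integral_norm_eq_lintegral_enorm (hf n)]
    rfl
  simpa only [hnorm, ENNReal.ofReal_zero] using ENNReal.tendsto_ofReal h

variable [IsProbabilityMeasure P]

lemma integral_abs_sub_integral_le_sqrt_variance {X : Ω → ℝ} (hX : MemLp X 2 P) :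
    ∫ ω, |X ω - P[X]| ∂P ≤ √(Var[X; P]) := by
  have hY : MemLp (fun ω => |X ω - P[X]|) 2 P := (hX.sub (memLp_const _)).abs
  apply Real.le_sqrt_of_sq_le
  have h := variance_nonneg (fun ω => |X ω - P[X]|) P
  rw [variance_eq_sub hY] at h
  rw [variance_eq_integral hX.aemeasurable]
  simpa [sq_abs] using h

lemma integral_abs_sub_integral_le_two_mul {X : Ω → ℝ} (hX : Integrable X P) :
    ∫ ω, |X ω - P[X]| ∂P ≤ 2 * ∫ ω, |X ω| ∂P := by
  have hmean : |P[X]| ≤ ∫ ω, |X ω| ∂P := abs_integral_le_integral_abs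
  calc ∫ ω, |X ω - P[X]| ∂P ≤ ∫ ω, (|X ω| + |P[X]|) ∂P :=
        integral_mono (hX.sub (integrable_const _)).abs (hX.abs.add (integrable_const _))
          fun ω => abs_sub _ _
    _ = ∫ ω, |X ω| ∂P + |P[X]| := by simp [integral_add hX.abs (integrable_const _)]
    _ ≤ 2 * ∫ ω, |X ω| ∂P := by linarith

variable {ι : Type*} [Fintype ι]

lemma integral_abs_sum_sub_integral_le_two_mul_sum {X : ι → Ω → ℝ}
    (hX : ∀ j, Integrable (X j) P) :
    ∫ ω, |∑ j, (X j ω - P[X j])| ∂P ≤ 2 * ∑ j, ∫ ω, |X j ω| ∂P := by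
  have hcentred : ∀ j, Integrable (fun ω => X j ω - P[X j]) P :=
    fun j => (hX j).sub (integrable_const _)
  calc ∫ ω, |∑ j, (X j ω - P[X j])| ∂P ≤ ∫ ω, ∑ j, |X j ω - P[X j]| ∂P :=
        integral_mono (integrable_finsetSum _ fun j _ => hcentred j).abs
          (integrable_finsetSum _ fun j _ => (hcentred j).abs)
          fun ω => Finset.abs_sum_le_sum_abs _ _
    _ = ∑ j, ∫ ω, |X j ω - P[X j]| ∂P :=
        integral_finsetSum _ fun j _ => (hcentred j).abs
    _ ≤ ∑ j, 2 * ∫ ω, |X j ω| ∂P :=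
        Finset.sum_le_sum fun j _ => integral_abs_sub_integral_le_two_mul (hX j)
    _ = 2 * ∑ j, ∫ ω, |X j ω| ∂P := (Finset.mul_sum _ _ _).symm

lemma integral_abs_sum_sub_integral_le_sqrt_sum_variance {X : ι → Ω → ℝ}
    (hX : ∀ j, MemLp (X j) 2 P) (hindep : iIndepFun X P) :
    ∫ ω, |∑ j, (X j ω - P[X j])| ∂P ≤ √(∑ j, Var[X j; P]) := by
  have hsum : ∀ ω, ∑ j, (X j ω - P[X j]) = (∑ j, X j) ω - P[∑ j, X j] := by
    intro ω
    rw [Finset.sum_sub_distrib, Finset.sum_apply, Finset.sum_fn,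
      integral_finsetSum _ fun j _ => (hX j).integrable one_le_two]
  simp only [hsum]
  rw [← IndepFun.variance_sum (fun j _ => hX j) fun i _ j _ hij => hindep.indepFun hij]
  exact integral_abs_sub_integral_le_sqrt_variance (memLp_finsetSum' _ fun j _ => hX j)

lemma integral_abs_sum_sub_integral_le_of_eq_add {X V W : ι → Ω → ℝ} (hXVW : ∀ j, X j = V j + W j)
    (hV : ∀ j, MemLp (V j) 2 P) (hVindep : iIndepFun V P) (hW : ∀ j, Integrable (W j) P) :
    ∫ ω, |∑ j, (X j ω - P[X j])| ∂P ≤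
      √(∑ j, Var[V j; P]) + 2 * ∑ j, ∫ ω, |W j ω| ∂P := by
  have hVint : ∀ j, Integrable (V j) P := fun j => (hV j).integrable one_le_two
  have hVc : Integrable (fun ω => ∑ j, (V j ω - P[V j])) P :=
    integrable_finsetSum _ fun j _ => (hVint j).sub (integrable_const _)
  have hWc : Integrable (fun ω => ∑ j, (W j ω - P[W j])) P :=
    integrable_finsetSum _ fun j _ => (hW j).sub (integrable_const _)
  have hsplit : ∀ ω, ∑ j, (X j ω - P[X j]) =
      ∑ j, (V j ω - P[V j]) + ∑ j, (W j ω - P[W j]) := by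
    intro ω
    simp only [hXVW, Pi.add_apply, integral_add (hVint _) (hW _), ← Finset.sum_add_distrib]
    exact Finset.sum_congr rfl fun j _ => by ring
  calc ∫ ω, |∑ j, (X j ω - P[X j])| ∂P
      ≤ ∫ ω, (|∑ j, (V j ω - P[V j])| + |∑ j, (W j ω - P[W j])|) ∂P :=
        integral_mono ((hVc.add hWc).congr (ae_of_all _ fun ω => (hsplit ω).symm)).abs
          (hVc.abs.add hWc.abs) fun ω => (hsplit ω).symm ▸ abs_add_le _ _
    _ = ∫ ω, |∑ j, (V j ω - P[V j])| ∂P + ∫ ω, |∑ j, (W j ω - P[W j])| ∂P :=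
        integral_add hVc.abs hWc.abs
    _ ≤ √(∑ j, Var[V j; P]) + 2 * ∑ j, ∫ ω, |W j ω| ∂P :=
        add_le_add (integral_abs_sum_sub_integral_le_sqrt_sum_variance hV hVindep)
          (integral_abs_sum_sub_integral_le_two_mul_sum hW)

lemma integral_abs_sum_sub_integral_le_sqrt_sum_sq_add_tail {X : ι → Ω → ℝ}
    (hX : ∀ j, Integrable (X j) P) (hindep : iIndepFun X P) (c : ι → ℝ) :
    ∫ ω, |∑ j, (X j ω - P[X j])| ∂P ≤
      √(∑ j, c j ^ 2) + 2 * ∑ j, ∫ ω in {ω | c j < |X j ω|}, |X j ω| ∂P := by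
  set tail : ι → Set ℝ := fun j => {x | c j < |x|}
  have htail : ∀ j, MeasurableSet (tail j) :=
    fun j => measurableSet_lt measurable_const measurable_abs
  have hcut : ∀ j, Measurable ((tail j)ᶜ.indicator id) :=
    fun j => measurable_id.indicator (htail j).compl
  set V : ι → Ω → ℝ := fun j => (tail j)ᶜ.indicator id ∘ X j
  set W : ι → Ω → ℝ := fun j => (tail j).indicator id ∘ X j
  have hV_le : ∀ j ω, |V j ω| ≤ |c j| := by
    intro j ω
    by_cases h : c j < |X j ω|
    · simp [V, tail, h]
    · simpa [V, tail, h] using (not_lt.1 h).trans (le_abs_self _)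
  have hV : ∀ j, MemLp (V j) 2 P := fun j =>
    .of_bound ((hcut j).comp_aemeasurable (hX j).aemeasurable).aestronglyMeasurable _
      (ae_of_all _ (hV_le j))
  have hV_var : ∀ j, Var[V j; P] ≤ c j ^ 2 := fun j =>
    calc Var[V j; P] ≤ ((|c j| - -|c j|) / 2) ^ 2 :=
          variance_le_sq_of_bounded (ae_of_all _ fun ω => abs_le.1 (hV_le j ω))
            (hV j).aemeasurable
      _ = c j ^ 2 := by rw [← sq_abs (c j)]; ring
  have hW_abs : ∀ j ω, |W j ω| = {ω | c j < |X j ω|}.indicator (fun ω => |X j ω|) ω := by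
    intro j ω
    by_cases h : c j < |X j ω| <;> simp [W, tail, h]
  have hW : ∀ j, Integrable (W j) P := fun j =>
    (hX j).mono ((measurable_id.indicator (htail j)).comp_aemeasurable
      (hX j).aemeasurable).aestronglyMeasurable
      (ae_of_all _ fun ω => by by_cases h : c j < |X j ω| <;> simp [W, tail, h])
  have hXVW : ∀ j, X j = V j + W j :=
    fun j => funext fun ω => (Set.indicator_compl_add_self_apply (tail j) id (X j ω)).symm
  calc ∫ ω, |∑ j, (X j ω - P[X j])| ∂P
      ≤ √(∑ j, Var[V j; P]) + 2 * ∑ j, ∫ ω, |W j ω| ∂P :=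
        integral_abs_sum_sub_integral_le_of_eq_add hXVW hV
          (hindep.comp _ hcut) hW
    _ ≤ √(∑ j, c j ^ 2) + 2 * ∑ j, ∫ ω in {ω | c j < |X j ω|}, |X j ω| ∂P := by
        gcongr with j
        · exact hV_var j
        · rw [funext (hW_abs j)]
          exact (integral_indicator₀
            ((hX j).aemeasurable.nullMeasurableSet_preimage (htail j))).le

lemma integral_abs_sum_sub_integral_div_le {X : ι → Ω → ℝ} (hX : ∀ j, Integrable (X j) P)
    (hindep : iIndepFun X P) {φ : ι → ℝ} (hφ : 0 < ∑ j, φ j) {N ε : ℝ} (hN : 0 ≤ N)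
    (hUI : ∀ j, ∫ ω in {ω | N * φ j < |X j ω|}, |X j ω| ∂P ≤ ε * φ j) :
    ∫ ω, |(∑ j, (X j ω - P[X j])) / ∑ j, φ j| ∂P ≤
      N * √((∑ j, φ j ^ 2) / (∑ j, φ j) ^ 2) + 2 * ε := by
  have htails : ∑ j, ∫ ω in {ω | N * φ j < |X j ω|}, |X j ω| ∂P ≤ ε * ∑ j, φ j := by
    rw [Finset.mul_sum]
    exact Finset.sum_le_sum fun j _ => hUI j
  have hlevels : √(∑ j, (N * φ j) ^ 2) = N * √(∑ j, φ j ^ 2) := by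
    simp only [mul_pow, ← Finset.mul_sum]
    rw [Real.sqrt_mul (sq_nonneg N), Real.sqrt_sq hN]
  have hbound := integral_abs_sum_sub_integral_le_sqrt_sum_sq_add_tail hX hindep fun j => N * φ j
  rw [hlevels] at hbound
  simp only [abs_div, abs_of_pos hφ, integral_div]
  rw [Real.sqrt_div' _ (sq_nonneg _), Real.sqrt_sq hφ.le, div_le_iff₀ hφ]
  calc ∫ ω, |∑ j, (X j ω - P[X j])| ∂P
      ≤ N * √(∑ j, φ j ^ 2) + 2 * (ε * ∑ j, φ j) := by linarith
    _ = (N * (√(∑ j, φ j ^ 2) / ∑ j, φ j) + 2 * ε) * ∑ j, φ j := by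
        field_simp

end

lemma tendsto_zero_of_forall_le_mul_sqrt_add {ι : Type*} {l : Filter ι} {a r : ι → ℝ}
    (hr : Tendsto r l (𝓝 0)) (ha : ∀ n, 0 ≤ a n)
    (h : ∀ ε > 0, ∃ C, ∀ᶠ n in l, a n ≤ C * √(r n) + ε) : Tendsto a l (𝓝 0) := by
  rw [Metric.tendsto_nhds]
  intro δ hδ
  obtain ⟨C, hC⟩ := h (δ / 2) (half_pos hδ)
  have hlim : Tendsto (fun n => C * √(r n)) l (𝓝 0) := by
    simpa using hr.sqrt.const_mul C
  filter_upwards [hC, hlim.eventually (gt_mem_nhds (half_pos hδ))] with n hn hsmall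
  rw [Real.dist_0_eq_abs, abs_of_nonneg (ha n)]
  linarith

theorem stmt_9_general
    (φ : ℕ → ℕ → ℝ)
    (hφpos : ∀ n : ℕ, ∀ i : ℕ, 1 ≤ i → i ≤ n → 0 < φ i n)
    (hratio : Tendsto (fun n : ℕ =>
        (∑ i ∈ Finset.Icc 1 n, (φ i n)^2) / (∑ i ∈ Finset.Icc 1 n, φ i n)^2)
      atTop (𝓝 0))
    {Ω : Type*} [MeasurableSpace Ω] (P : Measure Ω) [IsProbabilityMeasure P]
    (U : ℕ → ℕ → Ω → ℝ)
    (hint : ∀ n : ℕ, ∀ i : ℕ, 1 ≤ i → i ≤ n → Integrable (U i n) P)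
    (hindep : ∀ n : ℕ,
      iIndepFun
        (fun i : Fin n => U (i.1 + 1) n) P)
    (hUI : ∀ ε : ℝ, 0 < ε → ∃ N : ℝ, 0 < N ∧ ∀ n : ℕ, ∀ i : ℕ, 1 ≤ i → i ≤ n →
      ∫ ω in {ω | N * φ i n < |U i n ω|}, |U i n ω| ∂P ≤ ε * φ i n) :
    TendstoInMeasure P
      (fun n ω => (∑ i ∈ Finset.Icc 1 n, (U i n ω - ∫ ω', U i n ω' ∂P))
        / (∑ i ∈ Finset.Icc 1 n, φ i n))
      atTop (fun _ => (0 : ℝ)) := by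
  have hX : ∀ n (j : Fin n), Integrable (U (j + 1) n) P := fun n j => hint n _ (by omega) j.2
  refine tendstoInMeasure_zero_of_tendsto_integral_abs (fun n => ?_) ?_
  · simp only [Finset.sum_Icc_one_eq_sum_fin]
    exact (integrable_finsetSum _ fun j _ => (hX n j).sub (integrable_const _)).div_const _
  refine tendsto_zero_of_forall_le_mul_sqrt_add hratio
    (fun n => integral_nonneg fun _ => abs_nonneg _) fun ε hε => ?_
  obtain ⟨N, hN, hNε⟩ := hUI (ε / 2) (half_pos hε)
  refine ⟨N, (eventually_ge_atTop 1).mono fun n hn => ?_⟩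
  simp only [Finset.sum_Icc_one_eq_sum_fin]
  have hφ : 0 < ∑ j : Fin n, φ (j + 1) n :=
    Finset.sum_pos (fun j _ => hφpos n _ (by omega) j.2) ⟨⟨0, hn⟩, Finset.mem_univ _⟩
  have hbound := integral_abs_sum_sub_integral_div_le (hX n) (hindep n) hφ hN.le
    fun j => hNε n _ (by omega) j.2
  linarith

theorem stmt_9
    (φ : ℕ → ℕ → ℝ)
    (hφpos : ∀ n : ℕ, ∀ i : ℕ, 1 ≤ i → i ≤ n → 0 < φ i n)
    (hratio : Tendsto (fun n : ℕ =>
        (∑ i ∈ Finset.Icc 1 n, (φ i n)^2) / (∑ i ∈ Finset.Icc 1 n, φ i n)^2)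
      atTop (𝓝 0))
    {Ω : Type*} [MeasurableSpace Ω] (P : Measure Ω) [IsProbabilityMeasure P]
    (U : ℕ → ℕ → Ω → ℝ)
    (hmeas : ∀ i n, Measurable (U i n))
    (hint : ∀ n : ℕ, ∀ i : ℕ, 1 ≤ i → i ≤ n → Integrable (U i n) P)
    (hindep : ∀ n : ℕ,
      iIndepFun
        (fun i : Fin n => U (i.1 + 1) n) P)
    (hUI : ∀ ε : ℝ, 0 < ε → ∃ N : ℝ, 0 < N ∧ ∀ n : ℕ, ∀ i : ℕ, 1 ≤ i → i ≤ n →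
      ∫ ω in {ω | N * φ i n < |U i n ω|}, |U i n ω| ∂P ≤ ε * φ i n) :
    TendstoInMeasure P
      (fun n ω => (∑ i ∈ Finset.Icc 1 n, (U i n ω - ∫ ω', U i n ω' ∂P))
        / (∑ i ∈ Finset.Icc 1 n, φ i n))
      atTop (fun _ => (0 : ℝ)) :=
  stmt_9_general φ hφpos hratio P U hint hindep hUI
end

section
/- Let p, q, k > 0, set w := ln p − ln(kq), and define φ : ℝ → ℝ by φ(x) := (p + kq)·ln(e^x + kq). Then for every real v: [p·ln σ(w) + kq·ln(1 − σ(w))] − [p·ln σ(v) + kq·ln(1 − σ(v))] = D_φ(v + ln(kq), w + ln(kq)), where σ(x) := 1/(1 + e^{−x}) is the logistic sigmoid. -/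
open Real Filter Topology

/-- Bregman divergence associated to a differentiable convex function `φ`. -/
noncomputable def breg (φ : ℝ → ℝ) (a b : ℝ) : ℝ :=
  φ a - φ b - deriv φ b * (a - b)

/-- The logistic sigmoid. -/
noncomputable def sigm (x : ℝ) : ℝ := 1 / (1 + Real.exp (-x))

theorem stmt_15 (p q k : ℝ) (hp : 0 < p) (hq : 0 < q) (hk : 0 < k)
    (w : ℝ) (hw : w = Real.log p - Real.log (k * q)) (v : ℝ) :
    (p * Real.log (sigm w) + k * q * Real.log (1 - sigm w))
      - (p * Real.log (sigm v) + k * q * Real.log (1 - sigm v))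
    = breg (fun x => (p + k * q) * Real.log (Real.exp x + k * q))
        (v + Real.log (k * q)) (w + Real.log (k * q)) := by
  have hc0 : 0 < k * q := mul_pos hk hq
  set c := k * q with hc
  have hexpw : Real.exp w = p / c := by
    rw [hw, Real.exp_sub, Real.exp_log hp, Real.exp_log hc0]
  have hlog1 : ∀ x : ℝ, Real.log (sigm x) = x - Real.log (1 + Real.exp x) := by
    intro x
    have h1 : (0:ℝ) < 1 + Real.exp x := by positivity
    have hs : sigm x = Real.exp x / (1 + Real.exp x) := by
      unfold sigm
      rw [Real.exp_neg]
      field_simp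
      ring
    rw [hs, Real.log_div (Real.exp_ne_zero x) (ne_of_gt h1), Real.log_exp]
  have hlog2 : ∀ x : ℝ, Real.log (1 - sigm x) = - Real.log (1 + Real.exp x) := by
    intro x
    have h1 : (0:ℝ) < 1 + Real.exp x := by positivity
    have hs : 1 - sigm x = 1 / (1 + Real.exp x) := by
      unfold sigm
      rw [Real.exp_neg]
      field_simp
      ring
    rw [hs, Real.log_div one_ne_zero (ne_of_gt h1), Real.log_one, zero_sub]
  have hb : Real.exp (w + Real.log c) = p := by
    rw [Real.exp_add, hexpw, Real.exp_log hc0]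
    field_simp
  have hderiv : deriv (fun x => (p + c) * Real.log (Real.exp x + c)) (w + Real.log c) = p := by
    have hne : Real.exp (w + Real.log c) + c ≠ 0 := by positivity
    have h := (((Real.hasDerivAt_exp (w + Real.log c)).add_const c).log hne).const_mul (p + c)
    rw [h.deriv, hb]
    field_simp
  have hφb : Real.log (Real.exp (w + Real.log c) + c) = Real.log (p + c) := by
    rw [hb]
  have hφa : Real.log (Real.exp (v + Real.log c) + c)
      = Real.log c + Real.log (1 + Real.exp v) := by
    rw [Real.exp_add, Real.exp_log hc0, ← Real.log_mul (ne_of_gt hc0) (by positivity)]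
    congr 1; ring
  have hpc : Real.log (1 + Real.exp w) = Real.log (p + c) - Real.log c := by
    rw [hexpw, ← Real.log_div (by positivity) (ne_of_gt hc0)]
    congr 1; field_simp; ring
  unfold breg
  simp only [hderiv]
  rw [hlog1 w, hlog1 v, hlog2 w, hlog2 v, hφa, hφb, hpc]
  ring
end

section
/- Let q > 0 and let a, b be real numbers. For each k > 0 define φ_k : ℝ → ℝ by φ_k(x) := (e^b + kq)·ln(e^x + kq). Then lim_{k→∞} D_{φ_k}(a, b) = e^a − e^b − e^b·(a − b), i.e., the Bregman divergences associated to φ_k converge pointwise to the Bregman divergence associated to the exponential function. -/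
open Real Filter Topology

lemma deriv_mul_log_exp_add {c : ℝ} (hc : 0 ≤ c) (A b : ℝ) :
    deriv (fun x => A * log (exp x + c)) b = A * exp b / (exp b + c) := by
  have hpos : 0 < exp b + c := by positivity
  rw [(((hasDerivAt_exp b).add_const c).log hpos.ne').const_mul A |>.deriv, mul_div_assoc]

/-- The normalisation `A = exp b + c` makes the derivative at `b` equal to `exp b`, so only the
logarithmic term depends on `c`. -/
lemma breg_mul_log_exp_add {c : ℝ} (hc : 0 ≤ c) (a b : ℝ) :
    breg (fun x => (exp b + c) * log (exp x + c)) a b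
      = (exp b + c) * log (1 + (exp a - exp b) / (exp b + c)) - exp b * (a - b) := by
  have hb : 0 < exp b + c := by positivity
  have ha : 0 < exp a + c := by positivity
  have hratio : 1 + (exp a - exp b) / (exp b + c) = (exp a + c) / (exp b + c) := by
    field_simp
    ring
  rw [breg, deriv_mul_log_exp_add hc, hratio, log_div ha.ne' hb.ne', mul_div_cancel_left₀ _ hb.ne']
  ring

theorem stmt_16 (q : ℝ) (hq : 0 < q) (a b : ℝ) :
    Tendsto (fun k : ℝ =>
        breg (fun x => (Real.exp b + k * q) * Real.log (Real.exp x + k * q)) a b)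
      atTop (𝓝 (Real.exp a - Real.exp b - Real.exp b * (a - b))) := by
  have hscale : Tendsto (fun k : ℝ => exp b + k * q) atTop atTop :=
    tendsto_atTop_add_const_left _ _ (tendsto_id.atTop_mul_const hq)
  have hlimit := ((tendsto_mul_log_one_add_div_atTop (exp a - exp b)).comp hscale).sub_const
    (exp b * (a - b))
  refine hlimit.congr' ?_
  filter_upwards [eventually_ge_atTop 0] with k hk
  exact (breg_mul_log_exp_add (mul_nonneg hk hq.le) a b).symm
end

section
/- Let λ < 1 and let F = F_λ. Then for all reals x > 0, β > 0, and c > 0: F(x + c) − F(β + c) ≥ (1 + c/β)^{λ−1}·(F(x) − F(β)). Equivalently, (F(x + c) − F(β + c))/(1 + c/β)^{−1+λ} ≥ F(x) − F(β). -/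
/-!
Put `K = (1 + c/β)^(λ-1)` and `g t = F(t + c) - K F(t)`. Since
`g'(t) = (t + c)^(λ-1) - K t^(λ-1) = t^(λ-1) ((1 + c/t)^(λ-1) - K)` and `t ↦ (1 + c/t)^(λ-1)` is
increasing for `λ < 1`, the derivative changes sign from `-` to `+` at `t = β`, so `g` attains its
minimum over `t > 0` at `β`; `g x ≥ g β` is the claim.
-/

open Real

open Set

lemma isMinOn_of_hasDerivAt_nonpos_nonneg {g g' : ℝ → ℝ} {a b : ℝ} (hab : a < b)
    (hg : ∀ t ∈ Ioi a, HasDerivAt g (g' t) t)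
    (hg'_nonpos : ∀ t ∈ Ioo a b, g' t ≤ 0) (hg'_nonneg : ∀ t ∈ Ioi b, 0 ≤ g' t) :
    IsMinOn g (Ioi a) b := by
  have hcont : ContinuousOn g (Ioi a) := fun t ht => (hg t ht).continuousAt.continuousWithinAt
  intro x (hx : a < x)
  rcases le_total b x with hbx | hxb
  · have hmono : MonotoneOn g (Ici b) := by
      refine monotoneOn_of_hasDerivWithinAt_nonneg (f' := g') (convex_Ici b)
        (hcont.mono fun t (ht : b ≤ t) => hab.trans_le ht) (fun t ht => ?_) (fun t ht => ?_)
      · rw [interior_Ici] at ht ⊢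
        exact (hg t (hab.trans ht)).hasDerivWithinAt
      · rw [interior_Ici] at ht
        exact hg'_nonneg t ht
    exact hmono (mem_Ici.2 le_rfl) hbx hbx
  · have hanti : AntitoneOn g (Ioc a b) := by
      refine antitoneOn_of_hasDerivWithinAt_nonpos (f' := g') (convex_Ioc a b)
        (hcont.mono Ioc_subset_Ioi_self) (fun t ht => ?_) (fun t ht => ?_)
      · rw [interior_Ioc] at ht ⊢
        exact (hg t ht.1).hasDerivWithinAt
      · rw [interior_Ioc] at ht
        exact hg'_nonpos t ht
    exact hanti ⟨hx, hxb⟩ ⟨hab, le_rfl⟩ hxb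

lemma hasDerivAt_Flam {lam t : ℝ} (ht : 0 < t) :
    HasDerivAt (Flam lam) (t ^ (lam - 1)) t := by
  rcases eq_or_ne lam 0 with rfl | hlam
  · have hlog : Flam 0 = log := funext fun y => if_pos rfl
    simpa [hlog, rpow_neg_one] using hasDerivAt_log ht.ne'
  · have hpow : Flam lam = fun y => y ^ lam / lam := funext fun y => if_neg hlam
    rw [hpow]
    simpa [mul_div_cancel_left₀ _ hlam] using
      (hasDerivAt_rpow_const (p := lam) (Or.inl ht.ne')).div_const lam

lemma add_rpow_eq_one_add_div_rpow_mul {t c : ℝ} (ht : 0 < t) (htc : 0 ≤ t + c) (p : ℝ) :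
    (t + c) ^ p = (1 + c / t) ^ p * t ^ p := by
  have h : 1 + c / t = (t + c) / t := by field_simp
  rw [h, div_rpow htc ht.le, div_mul_cancel₀ _ (rpow_pos_of_pos ht p).ne']

lemma one_add_div_rpow_le_of_le {p c s t : ℝ} (hp : p ≤ 0) (hc : 0 ≤ c) (hs : 0 < s)
    (hst : s ≤ t) : (1 + c / s) ^ p ≤ (1 + c / t) ^ p :=
  rpow_le_rpow_of_nonpos (by have := div_nonneg hc (hs.trans_le hst).le; linarith) (by gcongr) hp

theorem stmt_17 {lam : ℝ} (hlam : lam < 1)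
    (x β c : ℝ) (hx : 0 < x) (hβ : 0 < β) (hc : 0 < c) :
    Flam lam (x + c) - Flam lam (β + c)
      ≥ (1 + c / β) ^ (lam - 1) * (Flam lam x - Flam lam β) := by
  set K := (1 + c / β) ^ (lam - 1)
  have hp : lam - 1 ≤ 0 := by linarith
  have hderiv : ∀ t ∈ Ioi (0 : ℝ), HasDerivAt (fun t => Flam lam (t + c) - K * Flam lam t)
      (t ^ (lam - 1) * ((1 + c / t) ^ (lam - 1) - K)) t := by
    intro t (ht : 0 < t)
    have hshift := (hasDerivAt_Flam (lam := lam) (by linarith : 0 < t + c)).comp_add_const t c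
    refine (hshift.sub ((hasDerivAt_Flam ht).const_mul K)).congr_deriv ?_
    rw [add_rpow_eq_one_add_div_rpow_mul ht (by linarith)]
    ring
  have hmin : Flam lam (β + c) - K * Flam lam β ≤ Flam lam (x + c) - K * Flam lam x :=
    isMinOn_of_hasDerivAt_nonpos_nonneg hβ hderiv
      (fun t ⟨ht, htβ⟩ => mul_nonpos_of_nonneg_of_nonpos (rpow_nonneg ht.le _)
        (sub_nonpos.2 (one_add_div_rpow_le_of_le hp hc.le ht htβ.le)))
      (fun t (hβt : β < t) => mul_nonneg (rpow_nonneg (hβ.trans hβt).le _)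
        (sub_nonneg.2 (one_add_div_rpow_le_of_le hp hc.le hβ hβt.le)))
      (show x ∈ Ioi 0 from hx)
  linarith
end
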